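/- Let X = {p} ⊔ Σ₂ where Σ₂ = {0,1}^ℤ is the two-sided full shift, and let T fix p and act as the left shift on Σ₂. Let f : X → ℝ with f(p) = 10 and f ≡ 0 on Σ₂, and set ℰ(μ) = ∫ f dμ. For the open cover 𝒰 = { {p} ∪ [0], {p} ∪ [1] } (cylinders [0],[1] in Σ₂), the quantity p³_n(T,ℰ;𝒰) = ∑_{B ∈ 𝒰_0^{n-1}} sup_{x∈B} e^{nℰ(Δ_x^n)} equals 2^n · e^{10n}, so limsup_n (1/n) log p³_n(T,ℰ;𝒰) = log 2 + 10, which strictly exceeds P(T,ℰ) = 10. -/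

import Mathlib

open MeasureTheory Filter Set
open scoped ENNReal Classical

/-- The space `X = {p} ⊔ Σ₂` with `Σ₂ = {0,1}^ℤ` the two-sided full shift space. -/
abbrev X19 : Type := Unit ⊕ (ℤ → Bool)

noncomputable instance : MeasurableSpace X19 := ⊤

/-- `T` fixes the point `p = inl ()` and acts as the left shift on `Σ₂`. -/
def T19 : X19 → X19 := Sum.map id fun u k => u (k + 1)

/-- `f(p) = 10` and `f ≡ 0` on `Σ₂`. -/
noncomputable def f19 : X19 → ℝ := Sum.elim (fun _ => 10) fun _ => 0

/-- The (linear) energy `ℰ(μ) = ∫ f dμ`. -/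
noncomputable def E19 (μ : Measure X19) : ℝ := ∫ x, f19 x ∂μ

/-- Empirical measure `Δ_x^n`. -/
noncomputable def emp19 (n : ℕ) (x : X19) : Measure X19 :=
  (n : ℝ≥0∞)⁻¹ • ∑ i ∈ Finset.range n, Measure.dirac (T19^[i] x)

/-- The cylinder `[b] ⊆ Σ₂`, viewed inside `X`. -/
def cyl19 (b : Bool) : Set X19 := {z | ∃ u : ℤ → Bool, z = Sum.inr u ∧ u 0 = b}

/-- The element `{p} ∪ [b]` of the cover `𝒰`. -/
def U19 (b : Bool) : Set X19 := {Sum.inl ()} ∪ cyl19 b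

/-- The open cover `𝒰 = { {p} ∪ [0], {p} ∪ [1] }`. -/
noncomputable def cover19 : Finset (Set X19) := {U19 false, U19 true}

/-- The join `𝒰_0^{n-1} = ⋁_{i=0}^{n-1} T^{-i}𝒰`. -/
noncomputable def join19 (n : ℕ) : Finset (Set X19) :=
  (Fintype.piFinset fun _ : Fin n => cover19).image fun u =>
    ⋂ i : Fin n, T19^[(i : ℕ)] ⁻¹' u i

/-- `p³_n(T,ℰ;𝒰)`: infimum over finite subcovers `β` of `𝒰_0^{n-1}` of
`∑_{B∈β} sup_{x∈B} e^{nℰ(Δ_x^n)}`. -/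
noncomputable def p3_19 (n : ℕ) : ℝ :=
  sInf {r | ∃ β : Finset (Set X19), β ⊆ join19 n ∧ ⋃₀ (β : Set (Set X19)) = univ ∧
    r = ∑ B ∈ β, sSup ((fun x => Real.exp (n * E19 (emp19 n x))) '' B)}

/-- `(n,ε)`-separated sets with respect to a distance function `d`. -/
def sep19 (d : X19 → X19 → ℝ) (n : ℕ) (ε : ℝ) (E : Finset X19) : Prop :=
  ∀ x ∈ E, ∀ y ∈ E, x ≠ y → ∃ i < n, ε ≤ d (T19^[i] x) (T19^[i] y)

/-- `P_n(T,ℰ,ε)`. -/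
noncomputable def Pn19 (d : X19 → X19 → ℝ) (n : ℕ) (ε : ℝ) : ℝ :=
  sSup {r | ∃ E : Finset X19, sep19 d n ε E ∧
    r = ∑ x ∈ E, Real.exp (n * E19 (emp19 n x))}

/-- The nonlinear topological pressure `P(T,ℰ) = lim_{ε→0} limsup_n (1/n) log P_n`,
realized as the supremum over `ε > 0` of the (monotone in `ε`) limsups. -/
noncomputable def PT19 (d : X19 → X19 → ℝ) : ℝ :=
  sSup {r | ∃ ε : ℝ, 0 < ε ∧
    r = Filter.atTop.limsup fun n => Real.log (Pn19 d n ε) / n}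

/-!
Every member of the join `𝒰_0^{n-1}` contains the fixed point `p`, where the weight
`e^{nℰ(Δ_x^n)}` takes its maximum `e^{10n}`, and each of the `2^n` members also contains a shift
point lying in no other member; so no member can be dropped from a subcover and
`p³_n = 2^n e^{10n}`. For the pressure, a point of `Σ₂` has weight `1`, and by compactness
`ε`-closeness in any compatible metric is forced by agreement on a window `[-M, M]`; hence an
`(n, ε)`-separated set has at most `2^{2M+n}` points in `Σ₂`, and `P_n(T, ℰ, ε)` lies between
`e^{10n}` and `(1 + 4^M) e^{10n}`.
-/

instance : MeasurableSingletonClass X19 :=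
  ⟨fun _ => MeasurableSpace.measurableSet_top⟩

theorem Real.tendsto_log_div_of_exp_le_of_le_mul_exp {a : ℕ → ℝ} {c K : ℝ}
    (hlow : ∀ᶠ n : ℕ in atTop, Real.exp (c * n) ≤ a n)
    (hup : ∀ᶠ n : ℕ in atTop, a n ≤ K * Real.exp (c * n)) :
    Tendsto (fun n => Real.log (a n) / n) atTop (nhds c) := by
  have hlim : Tendsto (fun n : ℕ => c + Real.log K / n) atTop (nhds c) := by
    simpa using tendsto_const_nhds.add (tendsto_const_div_atTop_nhds_zero_nat (Real.log K))
  have hbounds : ∀ᶠ n : ℕ in atTop,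
      c ≤ Real.log (a n) / n ∧ Real.log (a n) / n ≤ c + Real.log K / n := by
    filter_upwards [hlow, hup, eventually_gt_atTop 0] with n hlo hhi hn
    have hn' : (0 : ℝ) < n := Nat.cast_pos.2 hn
    have ha : 0 < a n := (Real.exp_pos _).trans_le hlo
    have hK : 0 < K := (mul_pos_iff_of_pos_right (Real.exp_pos _)).1 (ha.trans_le hhi)
    constructor
    · rw [le_div_iff₀ hn']
      exact (Real.le_log_iff_exp_le ha).2 hlo
    · rw [div_le_iff₀ hn', add_mul, div_mul_cancel₀ _ hn'.ne']
      calc Real.log (a n) ≤ Real.log (K * Real.exp (c * n)) := Real.log_le_log ha hhi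
        _ = c * n + Real.log K := by
          rw [Real.log_mul hK.ne' (Real.exp_pos _).ne', Real.log_exp, add_comm]
  exact tendsto_of_tendsto_of_tendsto_of_le_of_le' tendsto_const_nhds hlim
    (hbounds.mono fun _ h => h.1) (hbounds.mono fun _ h => h.2)

theorem exists_finset_dist_lt_of_forall_mem_eq {ι β Y : Type*} [TopologicalSpace β] [T2Space β]
    [CompactSpace β] [PseudoMetricSpace Y] {g : (ι → β) → Y} (hg : Continuous g) {ε : ℝ}
    (hε : 0 < ε) : ∃ F : Finset ι, ∀ u v : ι → β, (∀ k ∈ F, u k = v k) → dist (g u) (g v) < ε := by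
  set K := {q : (ι → β) × (ι → β) | ε ≤ dist (g q.1) (g q.2)}
  have hK : IsCompact K :=
    (isClosed_le continuous_const ((hg.comp continuous_fst).dist (hg.comp continuous_snd))).isCompact
  have hopen : ∀ k, IsOpen {q : (ι → β) × (ι → β) | q.1 k ≠ q.2 k} := fun k =>
    isClosed_diagonal.isOpen_compl.preimage
      (((continuous_apply k).comp continuous_fst).prodMk ((continuous_apply k).comp continuous_snd))
  have hcover : K ⊆ ⋃ k, {q | q.1 k ≠ q.2 k} := fun q (hq : ε ≤ dist (g q.1) (g q.2)) =>
    Set.mem_iUnion.2 <| Function.ne_iff.1 fun h => hε.not_ge (by simpa [h] using hq)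
  obtain ⟨F, hF⟩ := hK.elim_finite_subcover _ hopen hcover
  refine ⟨F, fun u v huv => lt_of_not_ge fun hle => ?_⟩
  obtain ⟨k, hk, hne⟩ := Set.mem_iUnion₂.1 (hF (show (u, v) ∈ K from hle))
  exact hne (huv k hk)

theorem card_le_card_pow_of_exists_ne {ι β : Type*} [Fintype β] {S : Finset (ι → β)}
    (W : Finset ι) (hS : ∀ u ∈ S, ∀ v ∈ S, u ≠ v → ∃ k ∈ W, u k ≠ v k) :
    S.card ≤ Fintype.card β ^ W.card := by
  have hinj : Set.InjOn (fun (u : ι → β) (k : W) => u k) S := by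
    intro u hu v hv huv
    by_contra hne
    obtain ⟨k, hk, h⟩ := hS u hu v hv hne
    exact h (congrFun huv ⟨k, hk⟩)
  simpa using Finset.card_le_card_of_injOn (t := Finset.univ) _ (fun _ _ => by simp) hinj

theorem T19_iterate_inl (i : ℕ) : T19^[i] (Sum.inl ()) = Sum.inl () :=
  Function.iterate_fixed rfl i

theorem T19_iterate_inr (i : ℕ) (u : ℤ → Bool) :
    T19^[i] (Sum.inr u) = Sum.inr fun k => u (k + i) := by
  induction i generalizing u with
  | zero => simp
  | succ i ih =>
    rw [Function.iterate_succ_apply, show T19 (Sum.inr u) = Sum.inr fun k => u (k + 1) from rfl,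
      ih]
    simp only [Nat.cast_succ, add_assoc]

theorem natCast_mul_E19_emp19 (n : ℕ) (x : X19) :
    n * E19 (emp19 n x) = ∑ i ∈ Finset.range n, f19 (T19^[i] x) := by
  rcases Nat.eq_zero_or_pos n with rfl | hn
  · simp
  rw [E19, emp19, integral_smul_measure,
    integral_finsetSum_measure fun i _ => integrable_dirac (by simp)]
  simp only [integral_dirac, smul_eq_mul, ENNReal.toReal_inv, ENNReal.toReal_natCast]
  field_simp

theorem exp_energy_inl (n : ℕ) (p : Unit) :
    Real.exp (n * E19 (emp19 n (Sum.inl p))) = Real.exp (10 * n) := by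
  cases p
  simp [natCast_mul_E19_emp19, T19_iterate_inl, f19, mul_comm]

theorem exp_energy_inr (n : ℕ) (u : ℤ → Bool) : Real.exp (n * E19 (emp19 n (Sum.inr u))) = 1 := by
  simp [natCast_mul_E19_emp19, T19_iterate_inr, f19]

theorem exp_energy_le (n : ℕ) (x : X19) :
    Real.exp (n * E19 (emp19 n x)) ≤ Real.exp (10 * n) := by
  rcases x with ⟨⟩ | u
  · exact (exp_energy_inl n ()).le
  · rw [exp_energy_inr]
    exact Real.one_le_exp (by positivity)

theorem inl_mem_U19 (b : Bool) : Sum.inl () ∈ U19 b := Or.inl rfl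

theorem inr_mem_U19 {v : ℤ → Bool} {b : Bool} : Sum.inr v ∈ U19 b ↔ v 0 = b := by
  simp [U19, cyl19]

theorem isOpen_U19 (b : Bool) : IsOpen (U19 b) := by
  rw [isOpen_sum_iff]
  constructor
  · convert isOpen_univ
    exact Set.eq_univ_of_forall fun _ => inl_mem_U19 b
  · have : (Sum.inr ⁻¹' U19 b : Set (ℤ → Bool)) = (fun u : ℤ → Bool => u 0) ⁻¹' {b} := by
      ext u
      exact inr_mem_U19
    rw [this]
    exact (isOpen_discrete _).preimage (continuous_apply 0)

theorem U19_union : U19 false ∪ U19 true = univ := by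
  refine Set.eq_univ_of_forall fun x => ?_
  rcases x with ⟨⟩ | v
  · exact Or.inl (inl_mem_U19 false)
  · cases hv : v 0
    · exact Or.inl (inr_mem_U19.2 hv)
    · exact Or.inr (inr_mem_U19.2 hv)

/-- The member `⋂_{i<n} T^{-i}({p} ∪ [b_i])` of the join `𝒰_0^{n-1}` labelled by the word `b`. -/
def cylJoin19 (n : ℕ) (b : Fin n → Bool) : Set X19 :=
  ⋂ i : Fin n, T19^[i] ⁻¹' U19 (b i)

theorem inl_mem_cylJoin19 (n : ℕ) (b : Fin n → Bool) : Sum.inl () ∈ cylJoin19 n b := by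
  simp [cylJoin19, T19_iterate_inl, inl_mem_U19]

theorem inr_mem_cylJoin19 {n : ℕ} {v : ℤ → Bool} {b : Fin n → Bool} :
    Sum.inr v ∈ cylJoin19 n b ↔ ∀ i : Fin n, v i = b i := by
  simp [cylJoin19, T19_iterate_inr, inr_mem_U19]

def wordSeq {n : ℕ} (b : Fin n → Bool) : ℤ → Bool :=
  fun k => if h : k.toNat < n then b ⟨k.toNat, h⟩ else false

theorem inr_wordSeq_mem_cylJoin19_iff {n : ℕ} {b b' : Fin n → Bool} :
    Sum.inr (wordSeq b) ∈ cylJoin19 n b' ↔ b = b' := by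
  simp [inr_mem_cylJoin19, wordSeq, funext_iff]

theorem cylJoin19_injective (n : ℕ) : Function.Injective (cylJoin19 n) := fun _ _ h =>
  inr_wordSeq_mem_cylJoin19_iff.1 (h ▸ inr_wordSeq_mem_cylJoin19_iff.2 rfl)

theorem join19_eq_image (n : ℕ) : join19 n = Finset.univ.image (cylJoin19 n) := by
  have hcover : ∀ B, B ∈ cover19 ↔ ∃ c, U19 c = B := by
    simp [cover19, eq_comm]
  ext B
  simp only [join19, Finset.mem_image, Fintype.mem_piFinset, hcover, Finset.mem_univ, true_and]
  constructor
  · rintro ⟨u, hu, rfl⟩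
    choose b hb using hu
    exact ⟨b, by simp only [cylJoin19, hb]⟩
  · rintro ⟨b, rfl⟩
    exact ⟨fun i => U19 (b i), fun i => ⟨b i, rfl⟩, rfl⟩

theorem sUnion_join19 (n : ℕ) : ⋃₀ (join19 n : Set (Set X19)) = univ := by
  refine Set.eq_univ_of_forall fun x => ?_
  simp only [join19_eq_image, Finset.coe_image, Finset.coe_univ, Set.image_univ,
    Set.sUnion_range, Set.mem_iUnion]
  rcases x with ⟨⟩ | v
  · exact ⟨fun _ => false, inl_mem_cylJoin19 n _⟩
  · exact ⟨fun i => v i, inr_mem_cylJoin19.2 fun _ => rfl⟩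

theorem eq_join19_of_subcover {n : ℕ} {β : Finset (Set X19)} (hsub : β ⊆ join19 n)
    (hcov : ⋃₀ (β : Set (Set X19)) = univ) : β = join19 n := by
  refine hsub.antisymm fun B hB => ?_
  rw [join19_eq_image] at hB hsub
  obtain ⟨b, -, rfl⟩ := Finset.mem_image.1 hB
  obtain ⟨C, hC, hxC⟩ := Set.mem_sUnion.1 (hcov ▸ Set.mem_univ (Sum.inr (wordSeq b)))
  obtain ⟨b', -, rfl⟩ := Finset.mem_image.1 (hsub hC)
  rwa [← inr_wordSeq_mem_cylJoin19_iff.1 hxC] at hC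

theorem sSup_exp_energy_cylJoin19 (n : ℕ) (b : Fin n → Bool) :
    sSup ((fun x => Real.exp (n * E19 (emp19 n x))) '' cylJoin19 n b) = Real.exp (10 * n) :=
  IsGreatest.csSup_eq ⟨⟨_, inl_mem_cylJoin19 n b, exp_energy_inl n ()⟩,
    Set.forall_mem_image.2 fun x _ => exp_energy_le n x⟩

theorem p3_19_eq (n : ℕ) : p3_19 n = 2 ^ n * Real.exp (10 * n) := by
  have hjoin : ∑ B ∈ join19 n, sSup ((fun x => Real.exp (n * E19 (emp19 n x))) '' B)
      = 2 ^ n * Real.exp (10 * n) := by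
    rw [join19_eq_image, Finset.sum_image fun _ _ _ _ h => cylJoin19_injective n h]
    simp [sSup_exp_energy_cylJoin19]
  have hset : {r | ∃ β : Finset (Set X19), β ⊆ join19 n ∧ ⋃₀ (β : Set (Set X19)) = univ ∧
      r = ∑ B ∈ β, sSup ((fun x => Real.exp (n * E19 (emp19 n x))) '' B)}
      = {2 ^ n * Real.exp (10 * n)} := by
    ext r
    constructor
    · rintro ⟨β, hsub, hcov, rfl⟩
      rw [eq_join19_of_subcover hsub hcov, hjoin]
      rfl
    · rintro rfl
      exact ⟨join19 n, subset_rfl, sUnion_join19 n, hjoin.symm⟩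
  rw [p3_19, hset, csInf_singleton]

section Pressure

variable {d : X19 → X19 → ℝ} {ε : ℝ} {M : ℕ}

theorem card_toRight_le_of_sep19
    (hM : ∀ u v : ℤ → Bool, (∀ k : ℤ, |k| ≤ M → u k = v k) → d (Sum.inr u) (Sum.inr v) < ε)
    {n : ℕ} {E : Finset X19} (hE : sep19 d n ε E) : E.toRight.card ≤ 2 ^ (2 * M + n) := by
  have hW : (Finset.Icc (-(M : ℤ)) (M + n - 1)).card = 2 * M + n := by
    rw [Int.card_Icc]
    omega
  rw [← hW, ← Fintype.card_bool]
  refine card_le_card_pow_of_exists_ne _ fun u hu v hv huv => ?_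
  rw [Finset.mem_toRight] at hu hv
  obtain ⟨i, hi, hsep⟩ := hE _ hu _ hv (Sum.inr_injective.ne huv)
  rw [T19_iterate_inr, T19_iterate_inr] at hsep
  by_contra! hagree
  refine hsep.not_gt (hM _ _ fun k hk => hagree _ ?_)
  rw [abs_le] at hk
  rw [Finset.mem_Icc]
  omega

theorem sum_exp_energy_le_of_sep19
    (hM : ∀ u v : ℤ → Bool, (∀ k : ℤ, |k| ≤ M → u k = v k) → d (Sum.inr u) (Sum.inr v) < ε)
    {n : ℕ} {E : Finset X19} (hE : sep19 d n ε E) :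
    ∑ x ∈ E, Real.exp (n * E19 (emp19 n x)) ≤ (1 + 4 ^ M) * Real.exp (10 * n) := by
  have hleft : (E.toLeft.card : ℝ) ≤ 1 := by exact_mod_cast Finset.card_le_one_of_subsingleton _
  have hright : (E.toRight.card : ℝ) ≤ 4 ^ M * 2 ^ n := by
    rw [show (4 : ℝ) ^ M * 2 ^ n = (2 ^ (2 * M + n) : ℕ) by push_cast; rw [pow_add, pow_mul]; norm_num]
    exact_mod_cast card_toRight_le_of_sep19 hM hE
  have hpow : (2 : ℝ) ^ n ≤ Real.exp (10 * n) := by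
    rw [mul_comm, Real.exp_nat_mul]
    gcongr
    exact (Real.add_one_le_exp 1).trans' (by norm_num) |>.trans (Real.exp_le_exp.2 (by norm_num))
  rw [← Finset.toLeft_disjSum_toRight (u := E), Finset.sum_disjSum]
  simp only [exp_energy_inl, exp_energy_inr, Finset.sum_const, nsmul_eq_mul, mul_one]
  nlinarith [Real.exp_pos (10 * n), pow_pos (by norm_num : (0 : ℝ) < 4) M]

theorem Pn19_mem_Icc
    (hM : ∀ u v : ℤ → Bool, (∀ k : ℤ, |k| ≤ M → u k = v k) → d (Sum.inr u) (Sum.inr v) < ε)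
    (n : ℕ) : Pn19 d n ε ∈ Set.Icc (Real.exp (10 * n)) ((1 + 4 ^ M) * Real.exp (10 * n)) := by
  have hub : ∀ r ∈ {r | ∃ E : Finset X19, sep19 d n ε E ∧
      r = ∑ x ∈ E, Real.exp (n * E19 (emp19 n x))}, r ≤ (1 + 4 ^ M) * Real.exp (10 * n) := by
    rintro r ⟨E, hE, rfl⟩
    exact sum_exp_energy_le_of_sep19 hM hE
  have hp : Real.exp (10 * n) ∈ {r | ∃ E : Finset X19, sep19 d n ε E ∧
      r = ∑ x ∈ E, Real.exp (n * E19 (emp19 n x))} :=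
    ⟨{Sum.inl ()}, by simp [sep19], by rw [Finset.sum_singleton, exp_energy_inl]⟩
  exact ⟨le_csSup ⟨_, hub⟩ hp, csSup_le ⟨_, hp⟩ hub⟩

theorem PT19_eq_ten
    (hd : ∀ ε > 0, ∃ M : ℕ, ∀ u v : ℤ → Bool, (∀ k : ℤ, |k| ≤ M → u k = v k) →
      d (Sum.inr u) (Sum.inr v) < ε) :
    PT19 d = 10 := by
  have hlimsup : ∀ ε > 0, (atTop.limsup fun n : ℕ => Real.log (Pn19 d n ε) / n) = 10 := by
    intro ε hε
    obtain ⟨M, hM⟩ := hd ε hε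
    refine Tendsto.limsup_eq (Real.tendsto_log_div_of_exp_le_of_le_mul_exp (K := 1 + 4 ^ M)
      (.of_forall fun n => ?_) (.of_forall fun n => ?_))
    · simpa [mul_comm] using (Pn19_mem_Icc hM n).1
    · simpa [mul_comm] using (Pn19_mem_Icc hM n).2
  have hset : {r | ∃ ε : ℝ, 0 < ε ∧
      r = atTop.limsup fun n : ℕ => Real.log (Pn19 d n ε) / n} = {10} := by
    ext r
    constructor
    · rintro ⟨ε, hε, rfl⟩
      exact hlimsup ε hε
    · rintro rfl
      exact ⟨1, one_pos, (hlimsup 1 one_pos).symm⟩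
  rw [PT19, hset, csSup_singleton]

end Pressure

theorem exists_window_dist_lt (m : MetricSpace X19)
    (hcompat : m.toPseudoMetricSpace.toUniformSpace.toTopologicalSpace =
      (inferInstance : TopologicalSpace X19))
    {ε : ℝ} (hε : 0 < ε) :
    ∃ M : ℕ, ∀ u v : ℤ → Bool, (∀ k : ℤ, |k| ≤ M → u k = v k) →
      @dist X19 m.toPseudoMetricSpace.toDist (Sum.inr u) (Sum.inr v) < ε := by
  have hinr : @Continuous _ _ _ m.toPseudoMetricSpace.toUniformSpace.toTopologicalSpace
      (Sum.inr : (ℤ → Bool) → X19) := hcompat ▸ continuous_inr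
  obtain ⟨F, hF⟩ := @exists_finset_dist_lt_of_forall_mem_eq _ _ _ _ _ _ m.toPseudoMetricSpace _ hinr _ hε
  refine ⟨F.sup Int.natAbs, fun u v huv => hF u v fun k hk => huv k ?_⟩
  rw [Int.abs_eq_natAbs]
  exact_mod_cast Finset.le_sup (f := Int.natAbs) hk

/-- for the fixed-point-plus-shift system, `𝒰` is an open cover,
`p³_n(T,ℰ;𝒰) = 2^n e^{10n}`, hence `limsup (1/n) log p³_n = log 2 + 10`, which
strictly exceeds the nonlinear pressure `P(T,ℰ) = 10` (for any metric inducing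
the topology of `X`). -/
theorem p3_exceeds_pressure (m : MetricSpace X19)
    (hcompat : m.toPseudoMetricSpace.toUniformSpace.toTopologicalSpace =
      (inferInstance : TopologicalSpace X19)) :
    (IsOpen (U19 false) ∧ IsOpen (U19 true) ∧ U19 false ∪ U19 true = univ) ∧
    (∀ n : ℕ, 1 ≤ n → p3_19 n = 2 ^ n * Real.exp (10 * n)) ∧
    (Filter.atTop.limsup fun n => Real.log (p3_19 n) / n) = Real.log 2 + 10 ∧
    PT19 (fun a b => @dist X19 m.toPseudoMetricSpace.toDist a b) = 10 ∧
    Real.log 2 + 10 > 10 := by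
  have hp3 : ∀ n : ℕ, p3_19 n = Real.exp ((Real.log 2 + 10) * n) := fun n => by
    rw [p3_19_eq, add_mul, Real.exp_add, mul_comm (Real.log 2), Real.exp_nat_mul,
      Real.exp_log two_pos]
  refine ⟨⟨isOpen_U19 false, isOpen_U19 true, U19_union⟩, fun n _ => p3_19_eq n, ?_,
    PT19_eq_ten fun ε hε => exists_window_dist_lt m hcompat hε, ?_⟩
  · exact (Real.tendsto_log_div_of_exp_le_of_le_mul_exp (K := 1)
      (.of_forall fun n => (hp3 n).ge) (.of_forall fun n => by simp [hp3])).limsup_eq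
  · linarith [Real.log_pos one_lt_two]
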